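/- arXiv:2309.01301 — 2 statements merged into one kernel-verified Lean document; each statement's English description precedes it below -/
import Mathlib

section
/- Let T be a tree with nonnegative edge weights and path distance d. Define the matrix Sigma on the leaf nodes of T by Sigma_ij = exp(-d(i,j)) for leaves i, j (with Sigma_ii = 1). Then Sigma is positive semidefinite. -/
open SimpleGraph Matrix

/-- The unique path between two vertices of a tree. -/
noncomputable def treePath {V : Type*} (G : SimpleGraph V) (hG : G.IsTree) (u v : V) :
    G.Walk u v :=
  (hG.existsUnique_path u v).exists.choose

/-- The weighted path distance in a tree. -/
noncomputable def treeDist {V : Type*} (G : SimpleGraph V) (hG : G.IsTree)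
    (w : Sym2 V → ℝ) (u v : V) : ℝ :=
  ((treePath G hG u v).edges.map w).sum

section Aux

variable {V : Type*} {G : SimpleGraph V}

lemma treePath_isPath (hG : G.IsTree) (u v : V) : (treePath G hG u v).IsPath :=
  (hG.existsUnique_path u v).exists.choose_spec

lemma treePath_unique (hG : G.IsTree) {u v : V} {p : G.Walk u v} (hp : p.IsPath) :
    p = treePath G hG u v := by
  obtain ⟨q, hq, hun⟩ := hG.existsUnique_path u v
  rw [hun p hp, hun _ (treePath_isPath hG u v)]

/-- An edge is on the unique path between `u` and `v` iff `u` and `v` are not reachable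
after deleting that edge. -/
lemma mem_treePath_iff_not_reachable (hG : G.IsTree) (e : Sym2 V) (u v : V) :
    e ∈ (treePath G hG u v).edges ↔ ¬ (G.deleteEdges {e}).Reachable u v := by
  classical
  constructor
  · rintro hmem ⟨W⟩
    set p := W.map (Hom.ofLE (G.deleteEdges_le (s := {e}))) with hp
    have hWe : e ∉ p.edges := by
      intro h
      rw [hp, SimpleGraph.Walk.edges_map] at h
      obtain ⟨e', he', heq⟩ := List.mem_map.mp h
      have hmem' := W.edges_subset_edgeSet he'
      rw [SimpleGraph.edgeSet_deleteEdges] at hmem'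
      apply hmem'.2
      have hid : Sym2.map (Hom.ofLE (G.deleteEdges_le (s := {e}))) e' = e' := by
        have hcoe : ⇑(Hom.ofLE (G.deleteEdges_le (s := {e}))) = id := rfl
        rw [hcoe, Sym2.map_id, id_eq]
      rw [hid] at heq
      simp [heq]
    have hbp : p.bypass = treePath G hG u v := treePath_unique hG p.bypass_isPath
    apply hWe
    rw [← hbp] at hmem
    exact p.edges_bypass_subset hmem
  · intro h
    by_contra hmem
    exact h ⟨(treePath G hG u v).toDeleteEdge e hmem⟩

lemma reachable_left_or_right (hG : G.IsTree) {a b : V} (hab : G.Adj a b) (v : V) :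
    (G.deleteEdges {s(a, b)}).Reachable a v ∨ (G.deleteEdges {s(a, b)}).Reachable b v := by
  classical
  have key : ∀ (p : G.Walk a v), p.IsPath → s(a, b) ∈ p.edges →
      (G.deleteEdges {s(a, b)}).Reachable b v := by
    intro p hpath hmem
    cases p with
    | nil => simp at hmem
    | cons h' q =>
      rename_i c
      rw [SimpleGraph.Walk.edges_cons] at hmem
      rcases List.mem_cons.mp hmem with heq | hq
      · -- s(a,b) = s(a,c), so c = b
        have hcb : b = c := Sym2.congr_right.mp heq
        subst hcb
        have hnodup := hpath.edges_nodup
        rw [SimpleGraph.Walk.edges_cons] at hnodup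
        have hne : s(a, b) ∉ q.edges := by
          rw [← heq] at hnodup ⊢
          exact (List.nodup_cons.mp hnodup).1
        exact ⟨q.toDeleteEdge _ hne⟩
      · exfalso
        have : a ∈ q.support := q.fst_mem_support_of_mem_edges hq
        rw [SimpleGraph.Walk.cons_isPath_iff] at hpath
        exact hpath.2 this
  by_cases hmem : s(a, b) ∈ (treePath G hG a v).edges
  · exact Or.inr (key _ (treePath_isPath hG a v) hmem)
  · exact Or.inl ⟨(treePath G hG a v).toDeleteEdge _ hmem⟩

/-- There is a "side" predicate for each edge: the edge lies on the path from `u` to `v`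
iff `u` and `v` are on different sides. -/
lemma exists_side (hG : G.IsTree) (e : Sym2 V) (he : e ∈ G.edgeSet) :
    ∃ S : V → Prop, ∀ u v : V, e ∈ (treePath G hG u v).edges ↔ ¬ (S u ↔ S v) := by
  induction e with
  | _ a b =>
    have hab : G.Adj a b := he
    refine ⟨fun v => (G.deleteEdges {s(a, b)}).Reachable a v, fun u v => ?_⟩
    rw [mem_treePath_iff_not_reachable hG]
    constructor
    · intro h hiff
      apply h
      by_cases hu : (G.deleteEdges {s(a, b)}).Reachable a u
      · exact hu.symm.trans (hiff.mp hu)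
      · have hv : ¬ (G.deleteEdges {s(a, b)}).Reachable a v := fun h' => hu (hiff.mpr h')
        rcases reachable_left_or_right hG hab u with h1 | h1
        · exact absurd h1 hu
        · rcases reachable_left_or_right hG hab v with h2 | h2
          · exact absurd h2 hv
          · exact h1.symm.trans h2
    · intro h h'
      exact h ⟨fun hu => hu.trans h', fun hv => hv.trans h'.symm⟩

end Aux

/-- for a tree with nonnegative edge weights and path distance `d`, the matrix
`Σ` on the leaves given by `Σ_{ij} = exp(-d(i,j))` (so `Σ_{ii} = 1`) is positive semidefinite. -/
theorem exp_neg_treeDist_posSemidef {V : Type*} [Fintype V] [DecidableEq V]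
    (G : SimpleGraph V) [DecidableRel G.Adj] (hG : G.IsTree)
    (w : Sym2 V → ℝ) (hw : ∀ e, 0 ≤ w e) :
    (Matrix.of fun i j : {v : V // G.degree v = 1} =>
      Real.exp (-(treeDist G hG w i.1 j.1))).PosSemidef := by
  classical
  -- side predicates for each edge
  set ι := {e : Sym2 V // e ∈ G.edgeFinset} with hι
  choose S hS using fun e : ι => exists_side hG e.1 (SimpleGraph.mem_edgeFinset.mp e.2)
  set t : ι → ℝ := fun e => Real.exp (-(w e.1)) with ht
  have ht0 : ∀ e, 0 < t e := fun e => Real.exp_pos _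
  have ht1 : ∀ e, t e ≤ 1 := fun e =>
    Real.exp_le_one_iff.mpr (neg_nonpos.mpr (hw e.1))
  have h1t : ∀ e, (0 : ℝ) ≤ 1 - t e := fun e => by linarith [ht1 e]
  set ψ : ι → V → Fin 3 → ℝ := fun e v =>
    ![Real.sqrt (t e), if S e v then Real.sqrt (1 - t e) else 0,
      if S e v then 0 else Real.sqrt (1 - t e)] with hψ
  -- Step A: entry as a product over all edges
  have stepA : ∀ u v : V, Real.exp (-(treeDist G hG w u v)) =
      ∏ e : ι, (if e.1 ∈ (treePath G hG u v).edges then t e else 1) := by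
    intro u v
    set l := (treePath G hG u v).edges with hl
    have hnodup : l.Nodup := (treePath_isPath hG u v).edges_nodup
    have hsum : treeDist G hG w u v = ∑ e ∈ l.toFinset, w e := by
      rw [treeDist, List.sum_toFinset _ hnodup]
    have hfil : G.edgeFinset.filter (· ∈ l) = l.toFinset := by
      ext e
      simp only [Finset.mem_filter, List.mem_toFinset, SimpleGraph.mem_edgeFinset]
      exact ⟨fun h => h.2, fun h => ⟨(treePath G hG u v).edges_subset_edgeSet h, h⟩⟩
    have h2 : ∏ e : ι, (if (e : Sym2 V) ∈ l then Real.exp (-(w (e : Sym2 V))) else 1)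
        = ∏ e ∈ G.edgeFinset, (if e ∈ l then Real.exp (-(w e)) else 1) :=
      (Finset.prod_subtype G.edgeFinset (fun x => Iff.rfl)
        (fun e => if e ∈ l then Real.exp (-(w e)) else 1)).symm
    rw [hsum, ← Finset.sum_neg_distrib, Real.exp_sum]
    simp only [ht]
    rw [h2, ← Finset.prod_filter, hfil]
  -- Step B: each factor is a 3-term Gram sum
  have stepB : ∀ (e : ι) (u v : V),
      (if e.1 ∈ (treePath G hG u v).edges then t e else 1) =
        ∑ k : Fin 3, ψ e u k * ψ e v k := by
    intro e u v
    have hmem := hS e u v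
    have hst : Real.sqrt (t e) * Real.sqrt (t e) = t e := Real.mul_self_sqrt (ht0 e).le
    have hst1 : Real.sqrt (1 - t e) * Real.sqrt (1 - t e) = 1 - t e :=
      Real.mul_self_sqrt (h1t e)
    by_cases hu : S e u <;> by_cases hv : S e v <;>
      [ (have : ¬ (e.1 ∈ (treePath G hG u v).edges) := fun h => (hmem.mp h) ⟨fun _ => hv, fun _ => hu⟩);
        (have : e.1 ∈ (treePath G hG u v).edges := hmem.mpr (fun h => hv (h.mp hu)));
        (have : e.1 ∈ (treePath G hG u v).edges := hmem.mpr (fun h => hu (h.mpr hv)));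
        (have : ¬ (e.1 ∈ (treePath G hG u v).edges) := fun h => (hmem.mp h) ⟨fun h' => absurd h' hu, fun h' => absurd h' hv⟩) ] <;>
      simp [hψ, Fin.sum_univ_three, hu, hv, this, hst, hst1] <;> ring
  -- Gram matrix
  set B : Matrix {v : V // G.degree v = 1} (ι → Fin 3) ℝ :=
    Matrix.of (fun i x => ∏ e : ι, ψ e i.1 (x e)) with hB
  have hfact : (Matrix.of fun i j : {v : V // G.degree v = 1} =>
      Real.exp (-(treeDist G hG w i.1 j.1))) = B * Bᴴ := by
    ext i j
    rw [Matrix.mul_apply]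
    simp only [Matrix.of_apply, Matrix.conjTranspose_apply, star_trivial, hB]
    rw [stepA i.1 j.1]
    calc ∏ e : ι, (if e.1 ∈ (treePath G hG i.1 j.1).edges then t e else 1)
        = ∏ e : ι, ∑ k : Fin 3, ψ e i.1 k * ψ e j.1 k :=
          Finset.prod_congr rfl fun e _ => stepB e i.1 j.1
      _ = ∑ x : ι → Fin 3, ∏ e : ι, ψ e i.1 (x e) * ψ e j.1 (x e) :=
          Fintype.prod_sum _
      _ = ∑ x : ι → Fin 3, (∏ e : ι, ψ e i.1 (x e)) * ∏ e : ι, ψ e j.1 (x e) := by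
          exact Finset.sum_congr rfl fun x _ => Finset.prod_mul_distrib
  rw [hfact]
  exact Matrix.posSemidef_self_mul_conjTranspose B
end

section
/- Let lambda_ij > 0 for all pairs of leaves i != j of a level-one (star-shaped) tree T_r with root r and n >= 3 leaves, and suppose lambda satisfies the HSE condition: lambda_{i,l}/lambda_{j,l} = c_{ij} for all distinct triples i, j, l (c_{ij} independent of l). Then there exist positive numbers theta_1,...,theta_n such that lambda_{pq} = theta_p * theta_q for all p != q. -/
/-!
Fix a leaf `p`. For leaves `q ≠ r` different from `p`, HSE gives `c p q = λ_pr / λ_qr`, so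
`λ_pq c_pq = λ_pq λ_pr / λ_qr` is symmetric in `q, r`: it is a number `g p` not depending on `q`.
Also `c p q c q p = (λ_pr / λ_qr) (λ_qr / λ_pr) = 1`, so `g p g q = λ_pq ^ 2`, and `θ p := √(g p)`.
-/

def IsHSE {ι : Type*} (lam c : ι → ι → ℝ) : Prop :=
  ∀ i j l, i ≠ j → i ≠ l → j ≠ l → lam i l / lam j l = c i j

namespace IsHSE

variable {ι : Type*} {lam c : ι → ι → ℝ}

theorem coeff_pos (h : IsHSE lam c) (hpos : ∀ p q, p ≠ q → 0 < lam p q) {i j l : ι}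
    (hij : i ≠ j) (hil : i ≠ l) (hjl : j ≠ l) : 0 < c i j := by
  rw [← h i j l hij hil hjl]
  exact div_pos (hpos i l hil) (hpos j l hjl)

theorem coeff_mul_coeff_swap (h : IsHSE lam c) (hpos : ∀ p q, p ≠ q → 0 < lam p q)
    {i j l : ι} (hij : i ≠ j) (hil : i ≠ l) (hjl : j ≠ l) : c i j * c j i = 1 := by
  rw [← h i j l hij hil hjl, ← h j i l hij.symm hjl hil]
  have := hpos i l hil
  have := hpos j l hjl
  field_simp

theorem mul_coeff_eq (h : IsHSE lam c) (hsymm : ∀ p q, lam p q = lam q p) {p q r : ι}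
    (hpq : p ≠ q) (hpr : p ≠ r) : lam p q * c p q = lam p r * c p r := by
  obtain rfl | hqr := eq_or_ne q r
  · rfl
  rw [← h p q r hpq hpr hqr, ← h p r q hpr hpq hqr.symm, hsymm r q]
  ring

end IsHSE

theorem exists_product_form_of_mul_eq_sq {ι : Type*} {lam : ι → ι → ℝ} (g : ι → ℝ)
    (hg : ∀ p, 0 < g p) (hpos : ∀ p q, p ≠ q → 0 < lam p q)
    (hmul : ∀ p q, p ≠ q → g p * g q = lam p q ^ 2) :
    ∃ θ : ι → ℝ, (∀ i, 0 < θ i) ∧ ∀ p q, p ≠ q → lam p q = θ p * θ q := by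
  refine ⟨fun p => √(g p), fun p => Real.sqrt_pos.mpr (hg p), fun p q hpq => ?_⟩
  rw [← Real.sqrt_mul (hg p).le, hmul p q hpq, Real.sqrt_sq (hpos p q hpq).le]

theorem IsHSE.exists_product_form {ι : Type*} {lam c : ι → ι → ℝ} (h : IsHSE lam c)
    (h3 : 3 ≤ ENat.card ι) (hsymm : ∀ p q, lam p q = lam q p)
    (hpos : ∀ p q, p ≠ q → 0 < lam p q) :
    ∃ θ : ι → ℝ, (∀ i, 0 < θ i) ∧ ∀ p q, p ≠ q → lam p q = θ p * θ q := by
  have third := ENat.exists_ne_ne_of_three_le h3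
  choose r hr using fun p : ι => third p p
  refine exists_product_form_of_mul_eq_sq (fun p => lam p (r p) * c p (r p)) (fun p => ?_)
    hpos fun p q hpq => ?_
  · obtain ⟨s, hsr, hsp⟩ := third (r p) p
    exact mul_pos (hpos p (r p) (hr p).1.symm)
      (h.coeff_pos hpos (hr p).1.symm hsp.symm hsr.symm)
  · obtain ⟨s, hsp, hsq⟩ := third p q
    rw [h.mul_coeff_eq hsymm (hr p).1.symm hpq, h.mul_coeff_eq hsymm (hr q).1.symm hpq.symm,
      hsymm q p]
    linear_combination lam p q ^ 2 * h.coeff_mul_coeff_swap hpos hpq hsp.symm hsq.symm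

/-- HSE on a star tree gives a product form: suppose `λ_{pq} > 0` for all
distinct leaves `p ≠ q` of a star tree with `n ≥ 3` leaves, `λ` is symmetric, and the HSE
condition holds: `λ_{il} / λ_{jl} = c_{ij}` for all pairwise-distinct `i, j, l` with `c_{ij}`
not depending on `l`.  Then there are positive `θ_1, …, θ_n` with `λ_{pq} = θ_p θ_q` for all
`p ≠ q`. -/
theorem star_hse_product_form {n : ℕ} (hn : 3 ≤ n)
    (lam : Fin n → Fin n → ℝ)
    (hsymm : ∀ p q, lam p q = lam q p)
    (hpos : ∀ p q, p ≠ q → 0 < lam p q)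
    (c : Fin n → Fin n → ℝ)
    (hhse : ∀ i j l, i ≠ j → i ≠ l → j ≠ l → lam i l / lam j l = c i j) :
    ∃ θ : Fin n → ℝ, (∀ i, 0 < θ i) ∧ ∀ p q, p ≠ q → lam p q = θ p * θ q :=
  IsHSE.exists_product_form hhse (by simpa using hn) hsymm hpos
end
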